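/- arXiv:1703.01796 — 2 statements merged into one kernel-verified Lean document; each statement's English description precedes it below -/
import Mathlib

section
/- Let S be a ℤ^k-graded ring with grading 𝒜 : (Fin k → ℤ) → AddSubgroup S and positive subring R = S_+, and suppose that for every non-zero v ∈ Fin k → ℕ and every non-zero x ∈ 𝒜 v there exists y ∈ 𝒜 (−v) with x * y ≠ 0. Let A be a right ideal of R whose right annihilator A^r in R is non-trivial. Then A^r contains a graded (two-sided) ideal of R that intersects the degree-0 component 𝒜 0 non-trivially. -/
/-- `s` belongs to the positive subring `S₊` of the `ℤ^k`-graded ring `S`: all of its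
non-zero homogeneous components have degree in `ℕ^k` (all coordinates non-negative). -/
def MemPositiveSubring {k : ℕ} {S : Type*} [Ring S]
    (𝒜 : (Fin k → ℤ) → AddSubgroup S) [GradedRing 𝒜] (s : S) : Prop :=
  ∀ v : Fin k → ℤ, (DirectSum.decompose 𝒜 s v : S) ≠ 0 → ∀ i : Fin k, 0 ≤ v i

/-!
Choose `t ≠ 0` in `R ∩ Aʳ` with the fewest non-zero homogeneous components, and order the degrees
`ℤ^k` lexicographically. If `b ∈ R` and `b * t = 0`, then the top component of `b * t` is
`b_w * t_v` for the leading degrees `w` of `b` and `v` of `t`; hence `b_w * t ∈ R ∩ Aʳ` has fewer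
components than `t` and vanishes, and peeling off leading components shows that every component of
`b` kills `t`. Applied to `b ∈ A`, this puts every homogeneous component of `t` into `Aʳ`;
multiplying a non-zero one by the element given by the hypothesis on `S` lands in degree `0`.
The ideal is the set of elements of `R` all of whose components lie in `Aʳ`.
-/

open DirectSum

section RightAnnihilator

variable {S : Type*} [Ring S]

def rightAnnihilator (A : Set S) : AddSubgroup S where
  carrier := {t | ∀ a ∈ A, a * t = 0}
  zero_mem' a _ := mul_zero a
  add_mem' hx hy a ha := by rw [mul_add, hx a ha, hy a ha, add_zero]
  neg_mem' hx a ha := by rw [mul_neg, hx a ha, neg_zero]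

theorem mul_mem_rightAnnihilator {A : Set S} {t : S} (ht : t ∈ rightAnnihilator A) (r : S) :
    t * r ∈ rightAnnihilator A := fun a ha => by rw [← mul_assoc, ht a ha, zero_mul]

end RightAnnihilator

section GradedRing

variable {ι S : Type*} [DecidableEq ι] [Ring S] (𝒜 : ι → AddSubgroup S)

theorem exists_coe_decompose_ne_zero [Decomposition 𝒜] {x : S} (hx : x ≠ 0) :
    ∃ i, (decompose 𝒜 x i : S) ≠ 0 := by
  classical
  by_contra! h
  exact hx (by rw [← sum_support_decompose 𝒜 x]; exact Finset.sum_eq_zero fun i _ => h i)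

section AddMonoid

variable [AddMonoid ι] [GradedRing 𝒜]

theorem coe_decompose_mul_apply [∀ i (x : 𝒜 i), Decidable (x ≠ 0)] (a b : S) (n : ι) :
    (decompose 𝒜 (a * b) n : S) =
      ∑ ij ∈ (decompose 𝒜 a).support ×ˢ (decompose 𝒜 b).support with ij.1 + ij.2 = n,
        (decompose 𝒜 a ij.1 : S) * decompose 𝒜 b ij.2 := by
  rw [decompose_mul, coe_mul_apply]

theorem coe_decompose_mul_mem {M : AddSubgroup S} {a b : S}
    (h : ∀ i j, (decompose 𝒜 a i : S) * decompose 𝒜 b j ∈ M) (n : ι) :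
    (decompose 𝒜 (a * b) n : S) ∈ M := by
  classical
  rw [coe_decompose_mul_apply]
  exact sum_mem fun ij _ => h ij.1 ij.2

theorem exists_add_eq_mul_ne_zero_of_coe_decompose_mul_ne_zero {a b : S} {n : ι}
    (h : (decompose 𝒜 (a * b) n : S) ≠ 0) :
    ∃ i j, i + j = n ∧ (decompose 𝒜 a i : S) * decompose 𝒜 b j ≠ 0 := by
  classical
  rw [coe_decompose_mul_apply] at h
  obtain ⟨ij, hij, hne⟩ := Finset.exists_ne_zero_of_sum_ne_zero h
  exact ⟨ij.1, ij.2, (Finset.mem_filter.mp hij).2, hne⟩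

theorem card_support_decompose_mul_lt [∀ i (x : 𝒜 i), Decidable (x ≠ 0)]
    {x t : S} {i v : ι} (hx : x ∈ 𝒜 i) (hv : v ∈ (decompose 𝒜 t).support)
    (hxv : x * decompose 𝒜 t v = 0) :
    (decompose 𝒜 (x * t)).support.card < (decompose 𝒜 t).support.card := by
  have hsub : (decompose 𝒜 (x * t)).support ⊆ ((decompose 𝒜 t).support.erase v).image (i + ·) := by
    intro u hu
    obtain ⟨i', j, rfl, hne⟩ := exists_add_eq_mul_ne_zero_of_coe_decompose_mul_ne_zero 𝒜
      (by simpa using hu)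
    obtain rfl : i = i' := by
      by_contra h
      exact hne (by rw [decompose_of_mem_ne 𝒜 hx h, zero_mul])
    rw [decompose_of_mem_same 𝒜 hx] at hne
    refine Finset.mem_image_of_mem _ (Finset.mem_erase.mpr ⟨?_, ?_⟩)
    · rintro rfl
      exact hne hxv
    · simpa using right_ne_zero_of_mul hne
  calc (decompose 𝒜 (x * t)).support.card
      ≤ ((decompose 𝒜 t).support.erase v).card :=
        (Finset.card_le_card hsub).trans Finset.card_image_le
    _ < (decompose 𝒜 t).support.card := Finset.card_erase_lt_of_mem hv

theorem decompose_sub_coe_decompose (b : S) (i : ι) :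
    decompose 𝒜 (b - decompose 𝒜 b i) = (decompose 𝒜 b).erase i := by
  ext j
  by_cases h : j = i
  · subst h; simp
  · simp [DFinsupp.erase_ne h, of_eq_of_ne _ _ _ h]

def gradedSubring (M : AddSubmonoid ι) : Subring S where
  carrier := {s | ∀ i, (decompose 𝒜 s i : S) ≠ 0 → i ∈ M}
  zero_mem' i h := (h (by simp)).elim
  add_mem' {x y} hx hy i h := by
    rw [decompose_add, DirectSum.add_apply, AddMemClass.coe_add] at h
    by_cases hxi : (decompose 𝒜 x i : S) = 0
    · exact hy i (by simpa [hxi] using h)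
    · exact hx i hxi
  neg_mem' {x} hx i h := hx i <| by
    rwa [decompose_neg, DFinsupp.neg_apply, NegMemClass.coe_neg, neg_ne_zero] at h
  one_mem' i h := by
    by_contra hi
    exact h (decompose_of_mem_ne 𝒜 SetLike.GradedOne.one_mem fun h0 => hi (h0 ▸ M.zero_mem))
  mul_mem' {x y} hx hy n h := by
    obtain ⟨i, j, rfl, hij⟩ := exists_add_eq_mul_ne_zero_of_coe_decompose_mul_ne_zero 𝒜 h
    exact M.add_mem (hx i (left_ne_zero_of_mul hij)) (hy j (right_ne_zero_of_mul hij))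

variable {𝒜} {M : AddSubmonoid ι}

theorem mem_gradedSubring_of_mem {x : S} {i : ι} (hx : x ∈ 𝒜 i) (hi : i ∈ M) :
    x ∈ gradedSubring 𝒜 M := by
  intro j hj
  by_contra hjM
  exact hj (decompose_of_mem_ne 𝒜 hx fun h => hjM (h ▸ hi))

theorem coe_decompose_mem_gradedSubring {s : S} (hs : s ∈ gradedSubring 𝒜 M) (i : ι) :
    (decompose 𝒜 s i : S) ∈ gradedSubring 𝒜 M := by
  by_cases h : (decompose 𝒜 s i : S) = 0
  · rw [h]; exact zero_mem _
  · exact mem_gradedSubring_of_mem (SetLike.coe_mem _) (hs i h)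

variable (𝒜) in
def gradedCore (N : AddSubgroup S) : AddSubgroup S where
  carrier := {z | ∀ i, (decompose 𝒜 z i : S) ∈ N}
  zero_mem' i := by simp
  add_mem' hx hy i := by simpa using add_mem (hx i) (hy i)
  neg_mem' hx i := by
    rw [decompose_neg, DFinsupp.neg_apply, NegMemClass.coe_neg]; exact neg_mem (hx i)

variable {N : AddSubgroup S}

theorem gradedCore_le : gradedCore 𝒜 N ≤ N := by
  classical
  intro z hz
  rw [← sum_support_decompose 𝒜 z]
  exact sum_mem fun i _ => hz i

theorem mem_gradedCore_of_mem {x : S} {i : ι} (hx : x ∈ 𝒜 i) (hxN : x ∈ N) :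
    x ∈ gradedCore 𝒜 N := by
  intro j
  by_cases h : i = j
  · rwa [← h, decompose_of_mem_same 𝒜 hx]
  · rw [decompose_of_mem_ne 𝒜 hx h]; exact zero_mem _

theorem coe_decompose_mem_gradedCore {z : S} (hz : z ∈ gradedCore 𝒜 N) (i : ι) :
    (decompose 𝒜 z i : S) ∈ gradedCore 𝒜 N :=
  mem_gradedCore_of_mem (SetLike.coe_mem _) (hz i)

theorem mul_mem_gradedCore (hN : ∀ z ∈ N, ∀ r ∈ gradedSubring 𝒜 M, z * r ∈ N) {z r : S}
    (hz : z ∈ gradedCore 𝒜 N) (hr : r ∈ gradedSubring 𝒜 M) : z * r ∈ gradedCore 𝒜 N :=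
  coe_decompose_mul_mem 𝒜 fun i j => hN _ (hz i) _ (coe_decompose_mem_gradedSubring hr j)

theorem mul_mem_gradedCore_left (hN : ∀ z ∈ N, ∀ r ∈ gradedSubring 𝒜 M, r * z ∈ N) {z r : S}
    (hz : z ∈ gradedCore 𝒜 N) (hr : r ∈ gradedSubring 𝒜 M) : r * z ∈ gradedCore 𝒜 N :=
  coe_decompose_mul_mem 𝒜 fun i j => hN _ (hz j) _ (coe_decompose_mem_gradedSubring hr i)

end AddMonoid

theorem mul_coe_decompose_eq_zero [AddLeftCancelMonoid ι] [GradedRing 𝒜] {a t : S}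
    (h : ∀ u, (decompose 𝒜 a u : S) * t = 0) (v : ι) : a * decompose 𝒜 t v = 0 := by
  classical
  rw [← sum_support_decompose 𝒜 a, Finset.sum_mul]
  refine Finset.sum_eq_zero fun u _ => ?_
  rw [← coe_decompose_mul_add_of_left_mem 𝒜 (SetLike.coe_mem _), h u, decompose_zero,
    DirectSum.zero_apply, ZeroMemClass.coe_zero]

end GradedRing

section Lex

variable {k : ℕ} {S : Type*} [Ring S] (𝒜 : (Fin k → ℤ) → AddSubgroup S) [GradedRing 𝒜]

theorem coe_decompose_mul_add_of_toLex_le {b t : S} {w v : Fin k → ℤ}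
    (hb : ∀ u, (decompose 𝒜 b u : S) ≠ 0 → toLex u ≤ toLex w)
    (ht : ∀ u, (decompose 𝒜 t u : S) ≠ 0 → toLex u ≤ toLex v) :
    (decompose 𝒜 (b * t) (w + v) : S) = decompose 𝒜 b w * decompose 𝒜 t v := by
  classical
  rw [coe_decompose_mul_apply]
  refine Finset.sum_eq_single (w, v) (fun ij hij hne => ?_) (fun hwv => ?_)
  · obtain ⟨hmem, hsum⟩ := Finset.mem_filter.mp hij
    obtain ⟨hi, hj⟩ := Finset.mem_product.mp hmem
    have h := (add_eq_add_iff_eq_and_eq (hb _ (by simpa using hi)) (ht _ (by simpa using hj))).mp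
      (congrArg toLex hsum)
    exact (hne (Prod.ext (toLex_inj.mp h.1) (toLex_inj.mp h.2))).elim
  · by_contra h
    refine hwv (Finset.mem_filter.mpr ⟨Finset.mem_product.mpr ⟨?_, ?_⟩, rfl⟩)
    · simpa using left_ne_zero_of_mul h
    · simpa using right_ne_zero_of_mul h

variable {𝒜} {M : AddSubmonoid (Fin k → ℤ)} {A : Set S}

theorem coe_decompose_mul_eq_zero_of_toLex_max [∀ i (x : 𝒜 i), Decidable (x ≠ 0)]
    (hA : ∀ a ∈ A, ∀ r ∈ gradedSubring 𝒜 M, a * r ∈ A)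
    {t : S} (ht : t ∈ gradedSubring 𝒜 M) (htA : t ∈ rightAnnihilator A)
    (hmin : ∀ s ∈ gradedSubring 𝒜 M, s ∈ rightAnnihilator A →
      (decompose 𝒜 s).support.card < (decompose 𝒜 t).support.card → s = 0)
    {b : S} (hb : b ∈ gradedSubring 𝒜 M) (hbt : b * t = 0) {w : Fin k → ℤ}
    (hw : ∀ u, (decompose 𝒜 b u : S) ≠ 0 → toLex u ≤ toLex w) :
    (decompose 𝒜 b w : S) * t = 0 := by
  obtain rfl | ht0 := eq_or_ne t 0
  · exact mul_zero _
  obtain ⟨v₀, hv₀⟩ := exists_coe_decompose_ne_zero 𝒜 ht0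
  obtain ⟨v, hv, hvmax⟩ := Finset.exists_max_image (decompose 𝒜 t).support toLex
    ⟨v₀, by simpa using hv₀⟩
  have htop : (decompose 𝒜 b w : S) * decompose 𝒜 t v = 0 := by
    rw [← coe_decompose_mul_add_of_toLex_le 𝒜 hw fun u hu => hvmax u (by simpa using hu), hbt,
      decompose_zero, DirectSum.zero_apply, ZeroMemClass.coe_zero]
  have hbw := coe_decompose_mem_gradedSubring hb w
  refine hmin _ (mul_mem hbw ht) (fun a ha => ?_) ?_
  · rw [← mul_assoc]; exact htA _ (hA a ha _ hbw)
  · exact card_support_decompose_mul_lt 𝒜 (SetLike.coe_mem _) hv htop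

theorem coe_decompose_mul_eq_zero_of_mul_eq_zero [∀ i (x : 𝒜 i), Decidable (x ≠ 0)]
    (hA : ∀ a ∈ A, ∀ r ∈ gradedSubring 𝒜 M, a * r ∈ A)
    {t : S} (ht : t ∈ gradedSubring 𝒜 M) (htA : t ∈ rightAnnihilator A)
    (hmin : ∀ s ∈ gradedSubring 𝒜 M, s ∈ rightAnnihilator A →
      (decompose 𝒜 s).support.card < (decompose 𝒜 t).support.card → s = 0)
    {b : S} (hb : b ∈ gradedSubring 𝒜 M) (hbt : b * t = 0) (w : Fin k → ℤ) :
    (decompose 𝒜 b w : S) * t = 0 := by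
  induction hn : (decompose 𝒜 b).support.card using Nat.strong_induction_on generalizing b with
  | _ n ih =>
  rcases (decompose 𝒜 b).support.eq_empty_or_nonempty with hempty | hne
  · rw [DFinsupp.support_eq_empty.mp hempty, DirectSum.zero_apply, ZeroMemClass.coe_zero, zero_mul]
  obtain ⟨w₀, hw₀, hmax⟩ := Finset.exists_max_image _ toLex hne
  have hlead := coe_decompose_mul_eq_zero_of_toLex_max hA ht htA hmin hb hbt
    fun u hu => hmax u (by simpa using hu)
  by_cases hw : w = w₀
  · rwa [hw]
  have hsub := decompose_sub_coe_decompose 𝒜 b w₀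
  have hcard : (decompose 𝒜 (b - decompose 𝒜 b w₀)).support.card < n := by
    rw [hsub, DFinsupp.support_erase, ← hn]
    exact Finset.card_erase_lt_of_mem hw₀
  have h := ih _ hcard (sub_mem hb (coe_decompose_mem_gradedSubring hb w₀))
    (by rw [sub_mul, hbt, hlead, sub_zero]) rfl
  rwa [hsub, DFinsupp.erase_ne hw] at h

theorem exists_homogeneous_ne_zero_mem_rightAnnihilator
    (hAR : ∀ a ∈ A, a ∈ gradedSubring 𝒜 M) (hA : ∀ a ∈ A, ∀ r ∈ gradedSubring 𝒜 M, a * r ∈ A)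
    (hann : ∃ t ∈ gradedSubring 𝒜 M, t ≠ 0 ∧ t ∈ rightAnnihilator A) :
    ∃ v ∈ M, ∃ x ∈ 𝒜 v, x ≠ 0 ∧ x ∈ rightAnnihilator A := by
  classical
  obtain ⟨t, ⟨ht, ht0, htA⟩, hmin⟩ :=
    (measure fun t => (decompose 𝒜 t).support.card).wf.has_min
      {t | t ∈ gradedSubring 𝒜 M ∧ t ≠ 0 ∧ t ∈ rightAnnihilator A} hann
  have hmin' : ∀ s ∈ gradedSubring 𝒜 M, s ∈ rightAnnihilator A →
      (decompose 𝒜 s).support.card < (decompose 𝒜 t).support.card → s = 0 :=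
    fun s hs hsA hlt => by_contra fun hs0 => hmin s ⟨hs, hs0, hsA⟩ hlt
  obtain ⟨v, hv⟩ := exists_coe_decompose_ne_zero 𝒜 ht0
  refine ⟨v, ht v hv, _, SetLike.coe_mem _, hv, fun a ha => mul_coe_decompose_eq_zero 𝒜
    (coe_decompose_mul_eq_zero_of_mul_eq_zero hA ht htA hmin' (hAR a ha) (htA a ha)) v⟩

end Lex

theorem exists_mul_mem_zero_ne_zero {k : ℕ} {S : Type*} [Ring S]
    {𝒜 : (Fin k → ℤ) → AddSubgroup S} [GradedRing 𝒜]
    (hS : ∀ v : Fin k → ℕ, v ≠ 0 → ∀ x ∈ 𝒜 (fun i => (v i : ℤ)), x ≠ 0 →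
      ∃ y ∈ 𝒜 (-(fun i => (v i : ℤ))), x * y ≠ 0)
    {x : S} {v : Fin k → ℤ} (hx : x ∈ 𝒜 v) (hv : 0 ≤ v) (hx0 : x ≠ 0) :
    ∃ y, x * y ∈ 𝒜 0 ∧ x * y ≠ 0 := by
  obtain rfl | hv0 := eq_or_ne v 0
  · exact ⟨1, by rwa [mul_one], by rwa [mul_one]⟩
  have hcast : (fun i => ((v i).toNat : ℤ)) = v := funext fun i => Int.toNat_of_nonneg (hv i)
  have hnat : (fun i => (v i).toNat) ≠ 0 := fun h =>
    hv0 (by rw [← hcast]; ext i; simp [congrFun h i])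
  obtain ⟨y, hy, hxy⟩ := hS _ hnat x (by rwa [hcast]) hx0
  rw [hcast] at hy
  exact ⟨y, by simpa using SetLike.mul_mem_graded hx hy, hxy⟩

/-- Let `R = S₊` be the positive subring of a `ℤ^k`-graded ring `S` such that for every
non-zero `v ∈ ℕ^k` and non-zero `x ∈ 𝒜 v` there is `y ∈ 𝒜 (-v)` with `x * y ≠ 0`.
If a right ideal `A` of `R` has non-trivial right annihilator `A^r` in `R`, then `A^r`
contains a graded two-sided ideal `I` of `R` intersecting the degree-`0` component
non-trivially. -/
theorem annihilator_contains_graded_ideal_meeting_degree_zero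
    {k : ℕ} {S : Type*} [Ring S]
    (𝒜 : (Fin k → ℤ) → AddSubgroup S) [GradedRing 𝒜]
    (hS : ∀ v : Fin k → ℕ, v ≠ 0 → ∀ x ∈ 𝒜 (fun i => (v i : ℤ)), x ≠ 0 →
      ∃ y ∈ 𝒜 (-(fun i => (v i : ℤ))), x * y ≠ 0)
    (A : AddSubgroup S) (hAsub : ∀ a ∈ A, MemPositiveSubring 𝒜 a)
    (hA : ∀ a ∈ A, ∀ t : S, MemPositiveSubring 𝒜 t → a * t ∈ A)
    (hann : ∃ t : S, MemPositiveSubring 𝒜 t ∧ t ≠ 0 ∧ ∀ a ∈ A, a * t = 0) :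
    ∃ I : AddSubgroup S,
      (∀ z ∈ I, MemPositiveSubring 𝒜 z) ∧
      (∀ z ∈ I, ∀ t : S, MemPositiveSubring 𝒜 t → z * t ∈ I ∧ t * z ∈ I) ∧
      (∀ z ∈ I, ∀ a ∈ A, a * z = 0) ∧
      (∀ z ∈ I, ∀ v : Fin k → ℤ, (DirectSum.decompose 𝒜 z v : S) ∈ I) ∧
      (∃ x ∈ I, x ∈ 𝒜 (0 : Fin k → ℤ) ∧ x ≠ 0) := by
  -- `MemPositiveSubring 𝒜` is, by definition, membership in `R`.
  let R := gradedSubring 𝒜 (AddSubmonoid.nonneg (Fin k → ℤ))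
  obtain ⟨v, hv, x, hxv, hx0, hxA⟩ :=
    exists_homogeneous_ne_zero_mem_rightAnnihilator (M := AddSubmonoid.nonneg _) hAsub hA hann
  obtain ⟨y, hxy, hxy0⟩ := exists_mul_mem_zero_ne_zero hS hxv hv hx0
  let N := R.toAddSubgroup ⊓ rightAnnihilator (A : Set S)
  have hNR : ∀ z ∈ N, ∀ r ∈ R, z * r ∈ N := fun z hz r hr =>
    ⟨R.mul_mem hz.1 hr, mul_mem_rightAnnihilator hz.2 r⟩
  have hRN : ∀ z ∈ N, ∀ r ∈ R, r * z ∈ N := fun z hz r hr =>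
    ⟨R.mul_mem hr hz.1, fun a ha => by rw [← mul_assoc]; exact hz.2 _ (hA a ha r hr)⟩
  refine ⟨gradedCore 𝒜 N, fun z hz => (gradedCore_le hz).1,
    fun z hz r hr => ⟨mul_mem_gradedCore hNR hz hr, mul_mem_gradedCore_left hRN hz hr⟩,
    fun z hz => (gradedCore_le hz).2, fun z hz => coe_decompose_mem_gradedCore hz,
    x * y, mem_gradedCore_of_mem hxy ⟨mem_gradedSubring_of_mem hxy (zero_mem _),
      mul_mem_rightAnnihilator hxA y⟩, hxy, hxy0⟩
end

section
/- Let K be a unital ring with trivial left annihilator (x * y = 0 for all y ∈ K implies x = 0), and let R be the polynomial ring in k commuting indeterminates over K, realized as AddMonoidAlgebra K (Fin k →₀ ℕ). Let A be a right ideal of R whose right annihilator A^r = { t ∈ R | ∀ a ∈ A, a * t = 0 } is non-trivial. Then there exists a non-zero constant c ∈ K (a non-zero scalar multiple of the monomial of exponent 0) such that a * c = 0 for every a ∈ A. -/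
/-!
Choose a non-zero right annihilator `t` of `A` with as few monomials as possible and let `μ` be
its leading exponent for the lexicographic order. If some coefficient `a_m` of some `a ∈ A` did
not kill `t`, take `m` largest such. The coefficient of `a * t = 0` at `m + μ` is `a_m t_μ`,
since every other contribution `a_p t_q` has `p > m`. So `a_m t_μ = 0`, and `a_m t`, which again
annihilates the right ideal `A`, has fewer monomials than `t`, hence vanishes. Thus all
`a_m t = 0`, and in particular `c = t_μ` works.
-/

open Finset

namespace AddMonoidAlgebra

variable {K M : Type*} [Semiring K]

section AddMonoid

variable [AddMonoid M]

theorem single_zero_mul_eq_zero_of_minimal {S : Set K[M]}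
    (hS : ∀ a ∈ S, ∀ r, a * r ∈ S) {t : K[M]} (htS : ∀ a ∈ S, a * t = 0)
    (hmin : ∀ u, (∀ a ∈ S, a * u = 0) → #u.coeff.support < #t.coeff.support → u = 0)
    {μ : M} (hμ : μ ∈ t.coeff.support) {c : K} (hc : c * t.coeff μ = 0) :
    single 0 c * t = 0 := by
  classical
  refine hmin _ (fun a ha ↦ by rw [← mul_assoc, htS _ (hS a ha _)]) ?_
  have hsub : (single 0 c * t).coeff.support ⊆ t.coeff.support.erase μ := by
    intro q hq
    rw [Finsupp.mem_support_iff, coeff_single_zero_mul] at hq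
    refine mem_erase.2 ⟨?_, Finsupp.mem_support_iff.2 fun h ↦ hq (by rw [h, mul_zero])⟩
    rintro rfl
    exact hq hc
  exact (card_le_card hsub).trans_lt (card_erase_lt_of_mem hμ)

end AddMonoid

section Ordered

variable [AddCommMonoid M] [LinearOrder M] [IsOrderedCancelAddMonoid M]

theorem coeff_mul_add_of_forall_gt {a t : K[M]} {m μ : M}
    (hμ : ∀ q ∈ t.coeff.support, q ≤ μ) (ha : ∀ p, m < p → single 0 (a.coeff p) * t = 0) :
    (a * t).coeff (m + μ) = a.coeff m * t.coeff μ := by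
  classical
  simp_rw [coeff_mul, Finsupp.sum, ← sum_product']
  refine (sum_eq_single (m, μ) ?_ ?_).trans (if_pos rfl)
  · rintro ⟨p, q⟩ hpq hne
    simp only [mem_product] at hpq
    refine ite_eq_right_iff.2 fun (hsum : p + q = m + μ) ↦ ?_
    rcases (hμ q hpq.2).eq_or_lt with rfl | hlt
    · exact absurd (by rw [add_right_cancel hsum]) hne
    have hmp : m < p := by
      by_contra! hpm
      exact (add_lt_add_of_le_of_lt hpm hlt).ne hsum
    simpa [coeff_single_zero_mul] using congr(coeff $(ha p hmp) q)
  · intro hmμ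
    rw [mem_product, not_and_or, Finsupp.notMem_support_iff, Finsupp.notMem_support_iff] at hmμ
    rcases hmμ with h | h <;> simp [h]

theorem single_zero_coeff_mul_eq_zero_of_minimal {S : Set K[M]}
    (hS : ∀ a ∈ S, ∀ r, a * r ∈ S) {t : K[M]} (htS : ∀ a ∈ S, a * t = 0)
    (hmin : ∀ u, (∀ a ∈ S, a * u = 0) → #u.coeff.support < #t.coeff.support → u = 0)
    {μ : M} (hμt : μ ∈ t.coeff.support) (hμ : ∀ q ∈ t.coeff.support, q ≤ μ)
    {a : K[M]} (ha : a ∈ S) (m : M) :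
    single 0 (a.coeff m) * t = 0 := by
  classical
  by_contra hm
  set bad := a.coeff.support.filter fun p ↦ single 0 (a.coeff p) * t ≠ 0
  have hm_bad : m ∈ bad := mem_filter.2 ⟨Finsupp.mem_support_iff.2 fun h ↦ hm (by simp [h]), hm⟩
  obtain ⟨m', hm'_bad, hm'max⟩ := bad.exists_max_image id ⟨m, hm_bad⟩
  have hgt : ∀ p, m' < p → single 0 (a.coeff p) * t = 0 := fun p hp ↦ by
    by_cases hpa : p ∈ a.coeff.support
    · by_contra hpt
      exact (hm'max p (mem_filter.2 ⟨hpa, hpt⟩)).not_gt hp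
    · simp [Finsupp.notMem_support_iff.1 hpa]
  have hc : a.coeff m' * t.coeff μ = 0 := by
    simpa [htS a ha] using (coeff_mul_add_of_forall_gt hμ hgt).symm
  exact (mem_filter.1 hm'_bad).2 (single_zero_mul_eq_zero_of_minimal hS htS hmin hμt hc)

theorem exists_ne_zero_forall_mul_single_zero_eq_zero {S : Set K[M]}
    (hS : ∀ a ∈ S, ∀ r, a * r ∈ S) (hann : ∃ t, t ≠ 0 ∧ ∀ a ∈ S, a * t = 0) :
    ∃ c : K, c ≠ 0 ∧ ∀ a ∈ S, a * single 0 c = 0 := by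
  obtain ⟨t, ⟨ht0, htS⟩, hmin⟩ := (measure fun t : K[M] ↦ #t.coeff.support).wf.has_min
      {t | t ≠ 0 ∧ ∀ a ∈ S, a * t = 0} hann
  replace hmin : ∀ u, (∀ a ∈ S, a * u = 0) → #u.coeff.support < #t.coeff.support → u = 0 :=
    fun u huS hlt ↦ by_contra fun hu ↦ hmin u ⟨hu, huS⟩ hlt
  obtain ⟨μ, hμt, hμ⟩ := t.coeff.support.exists_max_image id
    (Finsupp.support_nonempty_iff.2 (coeff_eq_zero.not.2 ht0))
  refine ⟨t.coeff μ, Finsupp.mem_support_iff.1 hμt, fun a ha ↦ ?_⟩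
  ext m
  simpa [coeff_single_zero_mul, coeff_mul_single_zero] using
    congr(coeff $(single_zero_coeff_mul_eq_zero_of_minimal hS htS hmin hμt hμ ha m) μ)

end Ordered

end AddMonoidAlgebra

theorem mccoy_right_ideal_of_trivial_left_annihilator_general {K : Type*} [Ring K] {k : ℕ}
    (A : AddSubgroup (AddMonoidAlgebra K (Fin k →₀ ℕ)))
    (hA : ∀ a ∈ A, ∀ t : AddMonoidAlgebra K (Fin k →₀ ℕ), a * t ∈ A)
    (hann : ∃ t : AddMonoidAlgebra K (Fin k →₀ ℕ), t ≠ 0 ∧ ∀ a ∈ A, a * t = 0) :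
    ∃ c : K, c ≠ 0 ∧ ∀ a ∈ A, a * AddMonoidAlgebra.single (0 : Fin k →₀ ℕ) c = 0 :=
  -- `K[Lex σ]` is `K[σ]` by definition; the lexicographic order is a monomial order.
  AddMonoidAlgebra.exists_ne_zero_forall_mul_single_zero_eq_zero
    (M := Lex (Fin k →₀ ℕ)) (S := (A : Set (AddMonoidAlgebra K (Fin k →₀ ℕ)))) hA hann

/-- Let `K` be a unital ring with trivial left annihilator, and let `R` be the polynomial
ring in `k` commuting indeterminates over `K`, realized as
`AddMonoidAlgebra K (Fin k →₀ ℕ)`.  If a right ideal `A` of `R` has a non-trivial right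
annihilator, then there is a non-zero constant `c ∈ K` with `a * c = 0` for all `a ∈ A`. -/
theorem mccoy_right_ideal_of_trivial_left_annihilator {K : Type*} [Ring K] {k : ℕ}
    (hK : ∀ x : K, (∀ y : K, x * y = 0) → x = 0)
    (A : AddSubgroup (AddMonoidAlgebra K (Fin k →₀ ℕ)))
    (hA : ∀ a ∈ A, ∀ t : AddMonoidAlgebra K (Fin k →₀ ℕ), a * t ∈ A)
    (hann : ∃ t : AddMonoidAlgebra K (Fin k →₀ ℕ), t ≠ 0 ∧ ∀ a ∈ A, a * t = 0) :
    ∃ c : K, c ≠ 0 ∧ ∀ a ∈ A, a * AddMonoidAlgebra.single (0 : Fin k →₀ ℕ) c = 0 :=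
  mccoy_right_ideal_of_trivial_left_annihilator_general A hA hann
end
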